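/- Measure of the stable reverse-hyperbolic-time block: Let (X, μ) be a probability space, f : X → X an invertible bimeasurable measure-preserving map with μ ergodic, and φ : X → ℝ a measurable function with φ(z) ≥ −L̄ for all z ∈ X. Let c > 0 with L̄ ≥ c and suppose that for μ-almost every x one has limsup_{n→∞} (1/n)·Σ_{j=1}^{n} φ(f^{−j}(x)) < −c. Then μ({x ∈ X : S_kφ(x) ≤ −(7c/8)·k for every k ≥ 1}) ≥ c/(8L̄ − 7c). -/

import Mathlib

/-!
Fix `x` and put `A n = S_nφ(f^{-n}x) + (7c/8)n`, the Birkhoff sum along the backward orbit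
shifted by the target rate. Its decrements are at most `L - 7c/8`, while the limsup hypothesis
gives `A n ≤ -(c/8)n` eventually, so `A` attains a new running minimum at a set of times `n` of
lower density at least `(c/8)/(L - 7c/8) = c/(8L - 7c)`. At such a time,
`S_kφ(f^{-n}x) = A n - A (n - k) - (7c/8)k ≤ -(7c/8)k` for all `k ≤ n`, so `f^{-n}x` lies in
the block truncated at horizon `n`. By Fatou's lemma and invariance of `μ`, each truncated block
has measure at least that density, and the block is their decreasing intersection.
-/

open MeasureTheory Filter Finset
open scoped ENNReal

def IsRecordMin (A : ℕ → ℝ) (n : ℕ) : Prop :=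
  ∀ i < n, A n ≤ A i

open scoped Classical in
/-- Each running minimum lies at most `D` below the previous one, and in between `A` stays above
the previous one. -/
theorem neg_mul_count_isRecordMin_le {A : ℕ → ℝ} {D : ℝ} (hD : 0 ≤ D) (h0 : -D ≤ A 0)
    (hstep : ∀ n, A n - D ≤ A (n + 1)) (N : ℕ) :
    -(D * Nat.count (IsRecordMin A) (N + 1)) ≤ A N := by
  induction N using Nat.strong_induction_on with
  | _ N ih =>
    by_cases hN : IsRecordMin A N
    · rcases N with _ | n
      · simpa [Nat.count_succ, hN] using h0
      · rw [Nat.count_succ, if_pos hN]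
        push_cast
        linarith [ih n n.lt_succ_self, hstep n]
    · obtain ⟨i, hi, hAi⟩ : ∃ i < N, A i < A N := by simpa [IsRecordMin] using hN
      have hcount :
          (Nat.count (IsRecordMin A) (i + 1) : ℝ) ≤ Nat.count (IsRecordMin A) (N + 1) := by
        exact_mod_cast Nat.count_monotone _ (Nat.succ_le_succ hi.le)
      nlinarith [ih i hi]

theorem Nat.count_le_count_add_of_imp {p q : ℕ → Prop} [DecidablePred p] [DecidablePred q]
    {m : ℕ} (hpq : ∀ n, m ≤ n → p n → q n) (N : ℕ) :
    Nat.count p N ≤ Nat.count q N + m := by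
  simp only [Nat.count_eq_card_filter_range]
  calc #{n ∈ range N | p n} ≤ #({n ∈ range N | q n} ∪ range m) := by
        refine card_le_card fun n hn => ?_
        simp only [mem_filter, mem_range, mem_union] at hn ⊢
        by_cases hmn : m ≤ n
        · exact Or.inl ⟨hn.1, hpq n hmn hn.2⟩
        · exact Or.inr (by omega)
    _ ≤ #{n ∈ range N | q n} + m := (card_union_le _ _).trans_eq (by rw [card_range])

theorem ofReal_le_liminf_natCast_div {K : ℕ → ℕ} {r b : ℝ}
    (hK : ∀ᶠ N in atTop, r * N - b ≤ K N) :
    ENNReal.ofReal r ≤ liminf (fun N => (K N : ℝ≥0∞) / N) atTop := by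
  have hlim : Tendsto (fun N : ℕ => ENNReal.ofReal ((r * N - b) / N)) atTop
      (nhds (ENNReal.ofReal r)) := by
    refine (ENNReal.continuous_ofReal.tendsto r).comp ?_
    have : Tendsto (fun N : ℕ => r - b / N) atTop (nhds r) := by
      simpa using tendsto_const_nhds.sub (tendsto_const_div_atTop_nhds_zero_nat b)
    refine this.congr' ?_
    filter_upwards [eventually_gt_atTop 0] with N hN
    field_simp
  rw [← hlim.liminf_eq]
  refine liminf_le_liminf ?_
  filter_upwards [hK, eventually_gt_atTop 0] with N hKN hN
  have hN' : (0 : ℝ) < N := by exact_mod_cast hN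
  rw [← ENNReal.ofReal_natCast (K N), ← ENNReal.ofReal_natCast N,
    ← ENNReal.ofReal_div_of_pos hN']
  exact ENNReal.ofReal_le_ofReal (by gcongr)

/-- No boundedness hypothesis is needed: the junk value `sInf ∅ = 0` is not below `b`. -/
theorem Real.eventually_lt_of_limsup_lt_of_nonpos {α : Type*} {l : Filter α} {u : α → ℝ}
    {b : ℝ} (hb : b ≤ 0) (h : limsup u l < b) : ∀ᶠ x in l, u x < b := by
  rw [limsup_eq] at h
  have hne : {a | ∀ᶠ x in l, u x ≤ a}.Nonempty := by
    by_contra hempty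
    rw [Set.not_nonempty_iff_eq_empty.mp hempty, Real.sInf_empty] at h
    linarith
  obtain ⟨a, ha, hab⟩ := exists_lt_of_csInf_lt hne h
  exact ha.mono fun x hx => hx.trans_lt hab

open scoped Classical in
theorem birkhoffSum_indicator_one {X : Type*} (g : X → X) (s : Set X) (n : ℕ) (x : X) :
    birkhoffSum g (s.indicator 1) n x = (Nat.count (fun k => g^[k] x ∈ s) n : ℝ≥0∞) := by
  simp [birkhoffSum, Set.indicator_apply, Nat.count_eq_card_filter_range]

section Backward

variable {X : Type*} {f g : X → X}

theorem Function.RightInverse.iterate_apply_iterate_of_le (hfg : Function.RightInverse g f)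
    {k n : ℕ} (hkn : k ≤ n) (x : X) : f^[k] (g^[n] x) = g^[n - k] x := by
  obtain ⟨t, rfl⟩ := Nat.exists_eq_add_of_le hkn
  rw [Function.iterate_add_apply, (hfg.iterate k) _, Nat.add_sub_cancel_left]

theorem birkhoffSum_iterate_rightInverse (hfg : Function.RightInverse g f) (φ : X → ℝ)
    (n : ℕ) (x : X) : birkhoffSum f φ n (g^[n] x) = ∑ j ∈ Icc 1 n, φ (g^[j] x) := by
  induction n with
  | zero => simp
  | succ n ih =>
    rw [birkhoffSum_succ', Function.iterate_succ_apply', hfg, ih,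
      sum_Icc_succ_top (by omega), Function.iterate_succ_apply', add_comm]

theorem birkhoffSum_iterate_rightInverse_sub (hfg : Function.RightInverse g f) (φ : X → ℝ)
    {k n : ℕ} (hkn : k ≤ n) (x : X) :
    birkhoffSum f φ k (g^[n] x) =
      birkhoffSum f φ n (g^[n] x) - birkhoffSum f φ (n - k) (g^[n - k] x) := by
  have h := birkhoffSum_add f φ k (n - k) (g^[n] x)
  rw [Nat.add_sub_cancel' hkn, hfg.iterate_apply_iterate_of_le hkn] at h
  linarith

/-- The points at which `0` is an `e^{-a}`-reverse hyperbolic time with respect to `m`. -/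
def reverseHyperbolicSet (f : X → X) (φ : X → ℝ) (a : ℝ) (m : ℕ) : Set X :=
  {y | ∀ k, 1 ≤ k → k ≤ m → birkhoffSum f φ k y ≤ -a * k}

theorem reverseHyperbolicSet_antitone (f : X → X) (φ : X → ℝ) (a : ℝ) :
    Antitone (reverseHyperbolicSet f φ a) :=
  fun _ _ hmm' _ hy k hk hkm => hy k hk (hkm.trans hmm')

theorem iInter_reverseHyperbolicSet (f : X → X) (φ : X → ℝ) (a : ℝ) :
    ⋂ m, reverseHyperbolicSet f φ a m =
      {y | ∀ k : ℕ, 1 ≤ k → birkhoffSum f φ k y ≤ -a * k} := by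
  ext y
  simp only [reverseHyperbolicSet, Set.mem_iInter, Set.mem_ofPred_eq]
  exact ⟨fun h k hk => h k k hk le_rfl, fun h _ k hk _ => h k hk⟩

theorem measurableSet_reverseHyperbolicSet [MeasurableSpace X] (hf : Measurable f)
    {φ : X → ℝ} (hφ : Measurable φ) (a : ℝ) (m : ℕ) :
    MeasurableSet (reverseHyperbolicSet f φ a m) := by
  simp only [reverseHyperbolicSet, Set.ofPred_forall]
  exact .iInter fun k => .iInter fun _ => .iInter fun _ =>
    measurableSet_le (Finset.measurable_sum _ fun i _ => hφ.comp (hf.iterate i))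
      measurable_const

theorem iterate_mem_reverseHyperbolicSet (hfg : Function.RightInverse g f) (φ : X → ℝ)
    (a : ℝ) (x : X) {m n : ℕ} (hmn : m ≤ n)
    (hn : IsRecordMin (fun n => birkhoffSum f φ n (g^[n] x) + a * n) n) :
    g^[n] x ∈ reverseHyperbolicSet f φ a m := by
  intro k hk hkm
  have hrec := hn (n - k) (by omega)
  rw [birkhoffSum_iterate_rightInverse_sub hfg φ (hkm.trans hmn)]
  push_cast [Nat.cast_sub (hkm.trans hmn)] at hrec ⊢
  linarith

open scoped Classical in
theorem ofReal_le_liminf_count_reverseHyperbolicSet (hfg : Function.RightInverse g f)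
    {φ : X → ℝ} {L a c : ℝ} (hφ : ∀ z, -L ≤ φ z) (hc : 0 ≤ c) (hac : a < c)
    (hcL : c ≤ L) {x : X}
    (hx : limsup (fun n : ℕ => (∑ j ∈ Icc 1 n, φ (g^[j] x)) / n) atTop < -c) (m : ℕ) :
    ENNReal.ofReal ((c - a) / (L - a)) ≤ liminf
      (fun N => (Nat.count (fun n => g^[n] x ∈ reverseHyperbolicSet f φ a m) N : ℝ≥0∞) / N)
      atTop := by
  set A : ℕ → ℝ := fun n => birkhoffSum f φ n (g^[n] x) + a * n with hA
  have hD : 0 < L - a := by linarith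
  have hstep : ∀ n, A n - (L - a) ≤ A (n + 1) := by
    intro n
    have h1 := birkhoffSum_iterate_rightInverse_sub hfg φ (Nat.le_add_left 1 n) x
    rw [birkhoffSum_one, Nat.add_sub_cancel] at h1
    simp only [hA]
    push_cast
    linarith [hφ (g^[n + 1] x)]
  have hdecay : ∀ᶠ n : ℕ in atTop, A n ≤ -(c - a) * n := by
    filter_upwards [Real.eventually_lt_of_limsup_lt_of_nonpos (by linarith) hx,
      eventually_gt_atTop 0] with n hn hn0
    rw [← birkhoffSum_iterate_rightInverse hfg, div_lt_iff₀ (by exact_mod_cast hn0)] at hn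
    simp only [hA]
    linarith
  have hrecords : ∀ᶠ N : ℕ in atTop,
      (c - a) / (L - a) * N - 1 ≤ Nat.count (IsRecordMin A) N := by
    filter_upwards [hdecay] with N hN
    have hmin := neg_mul_count_isRecordMin_le hD.le (by simp [hA]; linarith) hstep N
    have hsucc : Nat.count (IsRecordMin A) (N + 1) ≤ Nat.count (IsRecordMin A) N + 1 := by
      rw [Nat.count_succ]
      split_ifs <;> omega
    have hsucc' :
        (Nat.count (IsRecordMin A) (N + 1) : ℝ) ≤ Nat.count (IsRecordMin A) N + 1 := by
      exact_mod_cast hsucc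
    rw [div_mul_eq_mul_div, div_sub_one hD.ne', div_le_iff₀ hD]
    nlinarith
  refine ofReal_le_liminf_natCast_div (b := 1 + m) ?_
  filter_upwards [hrecords] with N hN
  have hvisits : (Nat.count (IsRecordMin A) N : ℝ) ≤
      Nat.count (fun n => g^[n] x ∈ reverseHyperbolicSet f φ a m) N + m := by
    exact_mod_cast Nat.count_le_count_add_of_imp (m := m)
      (fun n hmn hn => iterate_mem_reverseHyperbolicSet hfg φ a x hmn hn) N
  linarith


end Backward

section Fatou

variable {X : Type*} [MeasurableSpace X] {μ : Measure X} {g : X → X}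

theorem MeasureTheory.MeasurePreserving.lintegral_birkhoffSum (hg : MeasurePreserving g μ μ)
    {h : X → ℝ≥0∞} (hh : Measurable h) (n : ℕ) :
    ∫⁻ x, birkhoffSum g h n x ∂μ = n * ∫⁻ x, h x ∂μ := by
  simp only [birkhoffSum]
  rw [lintegral_finsetSum (f := fun k x => h (g^[k] x)) _
    fun i _ => hh.comp (hg.measurable.iterate i)]
  simp only [(hg.iterate _).lintegral_comp hh, sum_const, card_range, nsmul_eq_mul]

open scoped Classical in
/-- Fatou's lemma for the visit frequencies to `s`, whose integrals all equal `μ s` by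
invariance. -/
theorem MeasureTheory.MeasurePreserving.mul_measure_univ_le_of_ae_le_liminf_count
    (hg : MeasurePreserving g μ μ) {s : Set X} (hs : MeasurableSet s) {r : ℝ≥0∞}
    (h : ∀ᵐ x ∂μ,
      r ≤ liminf (fun N => (Nat.count (fun k => g^[k] x ∈ s) N : ℝ≥0∞) / N) atTop) :
    r * μ Set.univ ≤ μ s := by
  set F : ℕ → X → ℝ≥0∞ := fun N x => birkhoffSum g (s.indicator 1) N x / N with hF
  have hmeas : ∀ N, Measurable (birkhoffSum g (s.indicator (1 : X → ℝ≥0∞)) N) := fun N =>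
    Finset.measurable_sum _ fun i _ =>
      (measurable_one.indicator hs).comp (hg.measurable.iterate i)
  have hint : ∀ N, N ≠ 0 → ∫⁻ x, F N x ∂μ = μ s := by
    intro N hN
    simp only [hF, div_eq_mul_inv]
    rw [lintegral_mul_const _ (hmeas N), hg.lintegral_birkhoffSum (measurable_one.indicator hs),
      lintegral_indicator_one hs, mul_comm, ← mul_assoc,
      ENNReal.inv_mul_cancel (by exact_mod_cast hN) (ENNReal.natCast_ne_top N), one_mul]
  calc r * μ Set.univ = ∫⁻ _, r ∂μ := (lintegral_const r).symm
    _ ≤ ∫⁻ x, liminf (fun N => F N x) atTop ∂μ := by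
      refine lintegral_mono_ae (h.mono fun x hx => ?_)
      simpa only [hF, birkhoffSum_indicator_one] using hx
    _ ≤ liminf (fun N => ∫⁻ x, F N x ∂μ) atTop :=
      lintegral_liminf_le fun N => (hmeas N).div_const _
    _ = μ s := by
      rw [liminf_congr ((eventually_ne_atTop 0).mono hint), liminf_const]

end Fatou

/-- **Measure of the stable reverse-hyperbolic-time block.** Let `(X, μ)` be a probability
space, `f` an invertible bimeasurable measure-preserving map with `μ` ergodic, and `φ`
measurable with `φ ≥ −L̄`. Let `L̄ ≥ c > 0` and suppose
`limsup_n (1/n)·Σ_{j=1}^n φ(f^{−j}(x)) < −c` for `μ`-a.e. `x`. Then the set of points `x`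
such that `S_kφ(x) ≤ −(7c/8)·k` for every `k ≥ 1` has `μ`-measure at least
`c/(8L̄ − 7c)`. -/
theorem stable_reverse_hyperbolic_block_measure {X : Type*} [MeasurableSpace X]
    (μ : Measure X) [IsProbabilityMeasure μ]
    (f : X ≃ᵐ X) (herg : Ergodic (⇑f) μ)
    (φ : X → ℝ) (hφm : Measurable φ) (L : ℝ) (hφ : ∀ z, -L ≤ φ z)
    (c : ℝ) (hc : 0 < c) (hcL : c ≤ L)
    (hae : ∀ᵐ x ∂μ,
      limsup (fun n : ℕ =>
        (∑ j ∈ Finset.Icc 1 n, φ ((⇑f.symm)^[j] x)) / n) atTop < -c) :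
    ENNReal.ofReal (c / (8 * L - 7 * c)) ≤
      μ {x | ∀ k : ℕ, 1 ≤ k →
        birkhoffSum (⇑f) φ k x ≤ -(7 * c / 8) * k} := by
  have hrate : (c - 7 * c / 8) / (L - 7 * c / 8) = c / (8 * L - 7 * c) := by
    rw [div_eq_div_iff (by linarith) (by linarith)]
    ring
  have hblock : ∀ m, ENNReal.ofReal (c / (8 * L - 7 * c)) ≤
      μ (reverseHyperbolicSet f φ (7 * c / 8) m) := fun m => by
    simpa using (herg.toMeasurePreserving.symm f).mul_measure_univ_le_of_ae_le_liminf_count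
      (measurableSet_reverseHyperbolicSet f.measurable hφm _ m)
      (hae.mono fun x hx => hrate ▸ ofReal_le_liminf_count_reverseHyperbolicSet
        f.apply_symm_apply hφ hc.le (by linarith) hcL hx m)
  rw [← iInter_reverseHyperbolicSet]
  exact ge_of_tendsto (tendsto_measure_iInter_atTop
    (fun m => (measurableSet_reverseHyperbolicSet f.measurable hφm _ m).nullMeasurableSet)
    (reverseHyperbolicSet_antitone _ _ _) ⟨0, measure_ne_top μ _⟩) (.of_forall hblock)
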